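/- Let W be a finite multiset of positive reals with |W| ≥ 2, and let T ∈ 𝒯_W be a weighted tree whose underlying graph is not a star. Then T edge-transfers with respect to size to some weighted tree T' ∈ 𝒯_W not isomorphic to T. (That is, the unique minimal element of the poset (𝒯_W, ⪰_s) is the weighted star S_W.) -/

import Mathlib

open scoped Classical

noncomputable section

/-- A weighted graph on vertex set `Fin n`: a simple graph together with a symmetric
weight function which is positive on edges and zero on non-edges. -/
structure WGraph (n : ℕ) where
  G : SimpleGraph (Fin n)
  w : Fin n → Fin n → ℝ
  symm : ∀ u v, w u v = w v u
  pos : ∀ u v, G.Adj u v → 0 < w u v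
  zero : ∀ u v, ¬ G.Adj u v → w u v = 0

namespace WGraph

variable {n : ℕ}

/-- The weighted degree `d_G(u) = Σ_v ω(uv)`. -/
def deg (T : WGraph n) (u : Fin n) : ℝ := ∑ v, T.w u v

/-- The volume of the whole graph: sum of all weighted degrees. -/
def vol (T : WGraph n) : ℝ := ∑ u, T.deg u

/-- The combinatorial Laplacian `L = D - A`. -/
def lap (T : WGraph n) : Matrix (Fin n) (Fin n) ℝ :=
  Matrix.of fun u v => (if u = v then T.deg u else 0) - T.w u v

/-- The normalized Laplacian `𝓛 = D^{-1/2} L D^{-1/2}`. -/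
def nlap (T : WGraph n) : Matrix (Fin n) (Fin n) ℝ :=
  Matrix.of fun u v => T.lap u v / (Real.sqrt (T.deg u) * Real.sqrt (T.deg v))

/-- The weight of an (unordered) edge. -/
def ew (T : WGraph n) : Sym2 (Fin n) → ℝ := Sym2.lift ⟨T.w, T.symm⟩

/-- `ω(H)`: the product of the weights of all edges of a (spanning) subgraph `H`. -/
def wOf (T : WGraph n) (H : SimpleGraph (Fin n)) : ℝ := ∏ᶠ e ∈ H.edgeSet, T.ew e

/-- `τ(G)`: the sum of `ω(H)` over all spanning trees `H` of `G`. -/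
def tau (T : WGraph n) : ℝ :=
  ∑ᶠ H ∈ {H : SimpleGraph (Fin n) | H ≤ T.G ∧ H.IsTree}, T.wOf H

/-- The multiset of edge-weights of a weighted graph. -/
def edgeWeights (T : WGraph n) : Multiset ℝ := T.G.edgeFinset.val.map T.ew

end WGraph

/-- The sum of the reciprocals of the nonzero eigenvalues of a hermitian real matrix
(in `ℝ`, `0⁻¹ = 0`, so the zero eigenvalues contribute nothing to the sum). -/
def sumInvEig {n : ℕ} (M : Matrix (Fin n) (Fin n) ℝ) : ℝ :=
  if h : M.IsHermitian then ∑ i, (h.eigenvalues i)⁻¹ else 0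

/-- `H` is a spanning 2-forest of `G`: an acyclic subgraph of `G` on the full
vertex set with exactly two connected components. -/
def IsTwoForestOf {n : ℕ} (G H : SimpleGraph (Fin n)) : Prop :=
  H ≤ G ∧ H.IsAcyclic ∧ Nat.card H.ConnectedComponent = 2

/-- `S(F)`: the product of the numbers of vertices of the components of `F`. -/
def SVal {n : ℕ} (F : SimpleGraph (Fin n)) : ℝ :=
  ∏ᶠ c : F.ConnectedComponent, (Nat.card c.supp : ℝ)

/-- `V_T(F)`: the product over the components of `F` of their volumes in `T`,
i.e. of the sums of `T`-degrees of their vertices. -/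
def VVal {n : ℕ} (T : WGraph n) (F : SimpleGraph (Fin n)) : ℝ :=
  ∏ᶠ c : F.ConnectedComponent, ∑ᶠ u ∈ c.supp, T.deg u

/-- The number of vertices of the connected component of `v` in `H`. -/
def compSize {n : ℕ} (H : SimpleGraph (Fin n)) (v : Fin n) : ℕ :=
  Nat.card ((H.connectedComponentMk v).supp)

/-- The volume of the connected component of `v` in `H`, computed intrinsically
(with the weights of `T`): the sum over vertices `u` of the component of the sum of
weights of edges of the component at `u`. -/
def compVol {n : ℕ} (T : WGraph n) (H : SimpleGraph (Fin n)) (v : Fin n) : ℝ :=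
  ∑ᶠ u ∈ (H.connectedComponentMk v).supp, ∑ᶠ x ∈ (H.connectedComponentMk v).supp, T.w u x

/-- The common part of the two edge-transfer operations: `T'` is obtained from `T` by
deleting the edge `e₂ = v₂v₃` and adding the edge `v₁v₃` carrying the weight of `e₂`,
where `e₁ = v₁v₂` and `e₂ = v₂v₃` are adjacent edges of `T`. -/
def EdgeTransferAux {n : ℕ} (T T' : WGraph n) (v1 v2 v3 : Fin n) : Prop :=
  T.G.Adj v1 v2 ∧ T.G.Adj v2 v3 ∧ v1 ≠ v3 ∧
  T'.G = T.G.deleteEdges {s(v2, v3)} ⊔ SimpleGraph.fromEdgeSet {s(v1, v3)} ∧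
  T'.w v1 v3 = T.w v2 v3 ∧
  (∀ u v : Fin n, s(u, v) ≠ s(v1, v3) → s(u, v) ≠ s(v2, v3) → T'.w u v = T.w u v)

/-- `T` edge-transfers to `T'` with respect to size (via `v₁, v₂, v₃`):
the component `T₁` of `T ∖ {e₁, e₂}` containing `v₁` has more vertices than the
component `T₂` containing `v₂`. -/
def EdgeTransferSize {n : ℕ} (T T' : WGraph n) (v1 v2 v3 : Fin n) : Prop :=
  EdgeTransferAux T T' v1 v2 v3 ∧
  compSize (T.G.deleteEdges {s(v1, v2), s(v2, v3)}) v2 <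
    compSize (T.G.deleteEdges {s(v1, v2), s(v2, v3)}) v1

/-- `T` edge-transfers to `T'` with respect to volume (via `v₁, v₂, v₃`):
the component `T₁` of `T ∖ {e₁, e₂}` containing `v₁` has larger intrinsic volume than
the component `T₂` containing `v₂`. -/
def EdgeTransferVol {n : ℕ} (T T' : WGraph n) (v1 v2 v3 : Fin n) : Prop :=
  EdgeTransferAux T T' v1 v2 v3 ∧
  compVol T (T.G.deleteEdges {s(v1, v2), s(v2, v3)}) v2 <
    compVol T (T.G.deleteEdges {s(v1, v2), s(v2, v3)}) v1

/-- Isomorphism of weighted graphs: a graph isomorphism preserving the weights. -/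
def WIso {n : ℕ} (T T' : WGraph n) : Prop :=
  ∃ f : T.G ≃g T'.G, ∀ u v, T'.w (f u) (f v) = T.w u v

/-- The star graph on `Fin n`, centered at the vertex `0`. -/
def starGraph (n : ℕ) : SimpleGraph (Fin n) :=
  SimpleGraph.fromRel fun u _ => u.val = 0

/-- `T` is a polarized weighted path: its underlying graph is a path
`v₁ v₂ … v_n` and, writing `e_i = v_i v_{i+1}` and `c(e_i) = min {i, n - i}`,
one has `ω(e_i) ≥ ω(e_j)` whenever `c(e_i) ≤ c(e_j)`. -/
def IsPolarizedPath {n : ℕ} (T : WGraph n) : Prop :=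
  ∃ f : SimpleGraph.pathGraph n ≃g T.G,
    ∀ (i j : ℕ) (hi : i + 1 < n) (hj : j + 1 < n),
      min (i + 1) (n - 1 - i) ≤ min (j + 1) (n - 1 - j) →
      T.w (f ⟨j, by omega⟩) (f ⟨j + 1, hj⟩) ≤ T.w (f ⟨i, by omega⟩) (f ⟨i + 1, hi⟩)

/-- Unweighted: adjacency indicator. -/
def adjW {n : ℕ} (G : SimpleGraph (Fin n)) (u v : Fin n) : ℝ := if G.Adj u v then 1 else 0

/-- Unweighted degree. -/
def degG {n : ℕ} (G : SimpleGraph (Fin n)) (u : Fin n) : ℝ := ∑ v, adjW G u v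

/-- The combinatorial Laplacian `L = D - A` of a simple graph. -/
def lapG {n : ℕ} (G : SimpleGraph (Fin n)) : Matrix (Fin n) (Fin n) ℝ :=
  Matrix.of fun u v => (if u = v then degG G u else 0) - adjW G u v

/-- The normalized Laplacian `𝓛 = D^{-1/2} L D^{-1/2}` of a simple graph. -/
def nlapG {n : ℕ} (G : SimpleGraph (Fin n)) : Matrix (Fin n) (Fin n) ℝ :=
  Matrix.of fun u v => lapG G u v / (Real.sqrt (degG G u) * Real.sqrt (degG G v))

/-!
A tree that is not a star has an edge `v₁v₂` whose ends are both non-leaves. Orient it so that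
the side of `v₁` is at least as large as the side of `v₂`, and let `v₃ ≠ v₁` be another
neighbour of `v₂`. If `a₁, a₂, a₃` are the sizes of the components of `v₁, v₂, v₃` after
deleting `v₁v₂` and `v₂v₃`, then `a₂ < a₁`, so moving `v₂v₃` to `v₁v₃` is an edge-transfer with
respect to size; it keeps a tree with the same edge-weights. The new tree is not isomorphic to
the old one because its Wiener index `∑ₑ n₁(e) n₂(e)` is smaller: only the cut of `v₁v₂` changes,
from `a₁ (a₂ + a₃)` to `(a₁ + a₃) a₂`.
-/

namespace SimpleGraph

variable {V : Type*} {G K : SimpleGraph V} {a b c u v x y v1 v2 v3 : V}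

lemma reachable_sup_edge : (K ⊔ edge a b).Reachable a b := by
  rcases eq_or_ne a b with rfl | hab
  · rfl
  · exact Adj.reachable (Or.inr ((edge_adj ..).mpr ⟨Or.inl ⟨rfl, rfl⟩, hab⟩))

lemma reachable_sup_edge_iff :
    (K ⊔ edge a b).Reachable x y ↔
      K.Reachable x y ∨ (K.Reachable x a ∧ K.Reachable b y) ∨
        (K.Reachable x b ∧ K.Reachable a y) := by
  constructor
  · rintro ⟨p⟩
    induction p with
    | nil => exact Or.inl .rfl
    | @cons u w y huw _ ih =>
      rcases huw with huw | huw
      · have h := huw.reachable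
        rcases ih with h' | ⟨h₁, h₂⟩ | ⟨h₁, h₂⟩
        exacts [Or.inl (h.trans h'), Or.inr (Or.inl ⟨h.trans h₁, h₂⟩),
          Or.inr (Or.inr ⟨h.trans h₁, h₂⟩)]
      · obtain ⟨⟨rfl, rfl⟩ | ⟨rfl, rfl⟩, -⟩ := (edge_adj ..).mp huw <;>
          rcases ih with h' | ⟨h₁, h₂⟩ | ⟨h₁, h₂⟩ <;> tauto
  · have hle : K ≤ K ⊔ edge a b := le_sup_left
    rintro (h | ⟨h₁, h₂⟩ | ⟨h₁, h₂⟩)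
    · exact h.mono hle
    · exact ((h₁.mono hle).trans reachable_sup_edge).trans (h₂.mono hle)
    · exact ((h₁.mono hle).trans reachable_sup_edge.symm).trans (h₂.mono hle)

lemma reachable_sup_edge_eq_of_reachable (h : K.Reachable a c) :
    (K ⊔ edge a b).Reachable = (K ⊔ edge c b).Reachable := by
  ext x y
  simp only [reachable_sup_edge_iff]
  constructor <;> rintro (h' | ⟨h₁, h₂⟩ | ⟨h₁, h₂⟩)
  · exact Or.inl h'
  · exact Or.inr (Or.inl ⟨h₁.trans h, h₂⟩)
  · exact Or.inr (Or.inr ⟨h₁, h.symm.trans h₂⟩)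
  · exact Or.inl h'
  · exact Or.inr (Or.inl ⟨h₁.trans h.symm, h₂⟩)
  · exact Or.inr (Or.inr ⟨h₁, h.trans h₂⟩)

lemma deleteEdges_insert_sup_edge {s : Set (Sym2 V)} (h : G.Adj u v) (hs : s(u, v) ∉ s) :
    G.deleteEdges (insert s(u, v) s) ⊔ edge u v = G.deleteEdges s := by
  ext x y
  simp only [sup_adj, deleteEdges_adj, adj_edge, Set.mem_insert_iff, not_or]
  constructor
  · rintro (⟨hxy, -, hxs⟩ | ⟨he, -⟩)
    · exact ⟨hxy, hxs⟩
    · rw [← mem_edgeSet, ← he]; exact ⟨h, hs⟩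
  · rintro ⟨hxy, hxs⟩
    by_cases he : s(x, y) = s(u, v)
    · exact Or.inr ⟨he.symm, hxy.ne⟩
    · exact Or.inl ⟨hxy, he, hxs⟩

lemma sup_edge_deleteEdges_of_notMem {s : Set (Sym2 V)} (hs : s(a, b) ∉ s) :
    (K ⊔ edge a b).deleteEdges s = K.deleteEdges s ⊔ edge a b := by
  rw [deleteEdges_sup, edge, deleteEdges_fromEdgeSet,
    sdiff_eq_left.mpr (Set.disjoint_singleton_left.mpr hs)]

lemma sup_edge_deleteEdges_self (h : ¬K.Adj a b) :
    (K ⊔ edge a b).deleteEdges {s(a, b)} = K := by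
  rw [deleteEdges_sup, edge, deleteEdges_fromEdgeSet, Set.sdiff_self, fromEdgeSet_empty,
    sup_bot_eq, deleteEdges_eq_self, Set.disjoint_singleton_right]
  exact h

lemma IsAcyclic.not_reachable_deleteEdges (hG : G.IsAcyclic) (h : G.Adj u v) :
    ¬(G.deleteEdges {s(u, v)}).Reachable u v :=
  isBridge_iff.mp (isAcyclic_iff_forall_adj_isBridge.mp hG h)

lemma mem_supp_connectedComponentMk_iff {v y : V} :
    y ∈ (G.connectedComponentMk v).supp ↔ G.Reachable v y := by
  rw [ConnectedComponent.mem_supp_iff, ConnectedComponent.eq, reachable_comm]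

lemma sym2_ne_of_adj_adj (h12 : G.Adj v1 v2) (h13 : v1 ≠ v3) : s(v1, v2) ≠ s(v2, v3) := by
  simp [h12.ne, h13]

lemma adj_deleteEdges_of_adj_adj (h12 : G.Adj v1 v2) (h13 : v1 ≠ v3) :
    (G.deleteEdges {s(v2, v3)}).Adj v1 v2 :=
  deleteEdges_adj.mpr ⟨h12, Set.mem_singleton_iff.not.mpr (sym2_ne_of_adj_adj h12 h13)⟩

lemma deleteEdges_left_eq_sup (h12 : G.Adj v1 v2) (h23 : G.Adj v2 v3) (h13 : v1 ≠ v3) :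
    G.deleteEdges {s(v1, v2)} = G.deleteEdges {s(v1, v2), s(v2, v3)} ⊔ edge v2 v3 := by
  rw [Set.pair_comm, deleteEdges_insert_sup_edge h23 (sym2_ne_of_adj_adj h12 h13).symm]

lemma IsAcyclic.not_adj_of_adj_adj (hG : G.IsAcyclic) (h12 : G.Adj v1 v2) (h23 : G.Adj v2 v3)
    (h13 : v1 ≠ v3) : ¬G.Adj v1 v3 := by
  intro h13'
  have h21 : (G.deleteEdges {s(v2, v3)}).Adj v2 v1 := by simp [h12.symm, h13, h23.ne]
  have h13'' : (G.deleteEdges {s(v2, v3)}).Adj v1 v3 := by simp [h13', h13, h12.ne]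
  exact hG.not_reachable_deleteEdges h23 (h21.reachable.trans h13''.reachable)

lemma IsAcyclic.not_reachable_deleteEdges_pair (hG : G.IsAcyclic) (h12 : G.Adj v1 v2)
    (h23 : G.Adj v2 v3) (h13 : v1 ≠ v3) :
    ¬(G.deleteEdges {s(v1, v2), s(v2, v3)}).Reachable v1 v2 ∧
      ¬(G.deleteEdges {s(v1, v2), s(v2, v3)}).Reachable v2 v3 ∧
      ¬(G.deleteEdges {s(v1, v2), s(v2, v3)}).Reachable v1 v3 := by
  have hK12 : G.deleteEdges {s(v1, v2), s(v2, v3)} ≤ G.deleteEdges {s(v1, v2)} :=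
    deleteEdges_anti (by simp)
  have hK23 : G.deleteEdges {s(v1, v2), s(v2, v3)} ≤ G.deleteEdges {s(v2, v3)} :=
    deleteEdges_anti (by simp)
  have hbr12 := hG.not_reachable_deleteEdges h12
  refine ⟨fun h => hbr12 (h.mono hK12), fun h => hG.not_reachable_deleteEdges h23 (h.mono hK23),
    fun h => hbr12 ?_⟩
  rw [deleteEdges_left_eq_sup h12 h23 h13]
  exact (h.mono le_sup_left).trans reachable_sup_edge.symm

def transferEdge (G : SimpleGraph V) (v1 v2 v3 : V) : SimpleGraph V :=
  G.deleteEdges {s(v2, v3)} ⊔ edge v1 v3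

lemma reachable_transferEdge (h12 : G.Adj v1 v2) (h23 : G.Adj v2 v3) (h13 : v1 ≠ v3) :
    (G.transferEdge v1 v2 v3).Reachable = G.Reachable := by
  have hG : G.deleteEdges {s(v2, v3)} ⊔ edge v2 v3 = G := by
    simpa using deleteEdges_insert_sup_edge h23 (Set.notMem_empty _)
  rw [transferEdge,
    reachable_sup_edge_eq_of_reachable (adj_deleteEdges_of_adj_adj h12 h13).reachable, hG]

lemma edgeSet_transferEdge (h13 : v1 ≠ v3) :
    (G.transferEdge v1 v2 v3).edgeSet = insert s(v1, v3) (G.edgeSet \ {s(v2, v3)}) := by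
  rw [transferEdge, edgeSet_sup, edgeSet_deleteEdges, edgeSet_edge_of_ne h13,
    Set.union_singleton]

lemma IsTree.transferEdge [Finite V] (hG : G.IsTree) (h12 : G.Adj v1 v2) (h23 : G.Adj v2 v3)
    (h13 : v1 ≠ v3) : (G.transferEdge v1 v2 v3).IsTree := by
  have hnew : s(v1, v3) ∉ G.edgeSet \ {s(v2, v3)} := fun h =>
    hG.isAcyclic.not_adj_of_adj_adj h12 h23 h13 (Set.mem_sdiff_singleton.mp h).1
  rw [isTree_iff_connected_and_card] at hG ⊢
  refine ⟨(connected_iff _).mpr ⟨fun x y => ?_, hG.1.nonempty⟩, ?_⟩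
  · rw [reachable_transferEdge h12 h23 h13]
    exact hG.1.preconnected x y
  · rw [← hG.2, Nat.card_coe_set_eq, Nat.card_coe_set_eq, edgeSet_transferEdge h13,
      Set.ncard_insert_of_notMem hnew, Set.ncard_sdiff_singleton_add_one (G.mem_edgeSet.mpr h23)]

lemma transferEdge_deleteEdges_of_ne {e : Sym2 V} (he : e ≠ s(v1, v3)) :
    (G.transferEdge v1 v2 v3).deleteEdges {e} =
      G.deleteEdges (insert s(v2, v3) {e}) ⊔ edge v1 v3 := by
  rw [transferEdge, sup_edge_deleteEdges_of_notMem (Set.mem_singleton_iff.not.mpr he.symm),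
    deleteEdges_deleteEdges, Set.singleton_union]

lemma transferEdge_deleteEdges_self (hnadj : ¬G.Adj v1 v3) :
    (G.transferEdge v1 v2 v3).deleteEdges {s(v1, v3)} = G.deleteEdges {s(v2, v3)} :=
  sup_edge_deleteEdges_self fun h => hnadj (deleteEdges_le _ h)

lemma edgeFinset_transferEdge [Fintype V] [DecidableEq V] [DecidableRel G.Adj] (h13 : v1 ≠ v3) :
    (G.transferEdge v1 v2 v3).edgeFinset = insert s(v1, v3) (G.edgeFinset.erase s(v2, v3)) := by
  ext e
  simp [edgeSet_transferEdge h13, and_comm]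

lemma transferEdge_adj_new (h13 : v1 ≠ v3) : (G.transferEdge v1 v2 v3).Adj v1 v3 :=
  Or.inr ((edge_adj ..).mpr ⟨Or.inl ⟨rfl, rfl⟩, h13⟩)

lemma transferEdge_adj_left (h12 : G.Adj v1 v2) (h13 : v1 ≠ v3) :
    (G.transferEdge v1 v2 v3).Adj v1 v2 :=
  Or.inl (adj_deleteEdges_of_adj_adj h12 h13)

lemma Connected.eq_starGraph_of_forall_adj_adj_eq {c : V} (hG : G.Connected)
    (hc : ∀ y z, G.Adj c y → G.Adj y z → z = c) : G = starGraph c := by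
  have hS : ∀ x, x = c ∨ G.Adj c x := fun x => by
    induction (reachable_iff_reflTransGen c x).mp (hG.preconnected c x) with
    | refl => exact Or.inl rfl
    | tail _ hyz ih =>
      rcases ih with rfl | hcy
      exacts [Or.inr hyz, Or.inl (hc _ _ hcy hyz)]
  ext u v
  rw [starGraph_adj]
  refine ⟨fun h => ⟨h.ne, ?_⟩, ?_⟩
  · exact (hS u).imp_right fun hcu => hc u v hcu h
  · rintro ⟨huv, rfl | rfl⟩
    · exact (hS v).resolve_left (Ne.symm huv)
    · exact ((hS u).resolve_left huv).symm

lemma IsTree.exists_forall_adj_adj_eq [Fintype V] (hG : G.IsTree)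
    (h : ∀ p q r s, G.Adj p q → G.Adj p r → r ≠ q → G.Adj q s → s = p) :
    ∃ c, ∀ y z, G.Adj c y → G.Adj y z → z = c := by
  classical
  cases subsingleton_or_nontrivial V
  · obtain ⟨c⟩ := hG.connected.nonempty
    exact ⟨c, fun y _ hcy _ => absurd (Subsingleton.elim c y) hcy.ne⟩
  · obtain ⟨ℓ, hℓ⟩ := hG.exists_vert_degree_one_of_nontrivial
    obtain ⟨c, hℓc, hc⟩ := degree_eq_one_iff_existsUnique_adj.mp hℓ
    refine ⟨c, fun y z hcy hyz => ?_⟩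
    by_cases hyℓ : y = ℓ
    · exact hc z (hyℓ ▸ hyz)
    · exact h c y ℓ z hcy hℓc.symm (Ne.symm hyℓ) hyz

end SimpleGraph

section CompSize

open SimpleGraph

variable {n : ℕ} {H K : SimpleGraph (Fin n)} {a b u v : Fin n}

lemma compSize_eq_of_reachable_iff (h : ∀ y, H.Reachable v y ↔ K.Reachable v y) :
    compSize H v = compSize K v := by
  have hsupp : (H.connectedComponentMk v).supp = (K.connectedComponentMk v).supp := by
    ext y
    simp only [mem_supp_connectedComponentMk_iff, h]
  rw [compSize, compSize, hsupp]

lemma compSize_eq_of_reachable (h : H.Reachable u v) : compSize H u = compSize H v := by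
  rw [compSize, compSize, ConnectedComponent.sound h]

lemma compSize_pos : 0 < compSize H v :=
  Nat.card_pos_iff.mpr ⟨⟨v, mem_supp_connectedComponentMk_iff.mpr .rfl⟩, inferInstance⟩

lemma compSize_iso {H' : SimpleGraph (Fin n)} (φ : H ≃g H') (v : Fin n) :
    compSize H' (φ v) = compSize H v :=
  Nat.card_congr (Equiv.subtypeEquiv φ.toEquiv fun y => by
    simp only [mem_supp_connectedComponentMk_iff]
    exact Iso.reachable_iff.symm).symm

lemma compSize_sup_edge_of_not_reachable (ha : ¬K.Reachable v a) (hb : ¬K.Reachable v b) :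
    compSize (K ⊔ edge a b) v = compSize K v :=
  compSize_eq_of_reachable_iff fun y => by rw [reachable_sup_edge_iff]; tauto

lemma compSize_sup_edge (h : ¬K.Reachable a b) :
    compSize (K ⊔ edge a b) a = compSize K a + compSize K b := by
  have hsupp : ((K ⊔ edge a b).connectedComponentMk a).supp =
      (K.connectedComponentMk a).supp ∪ (K.connectedComponentMk b).supp := by
    ext y
    simp only [Set.mem_union, mem_supp_connectedComponentMk_iff, reachable_sup_edge_iff]
    constructor
    · rintro (h' | ⟨-, h'⟩ | ⟨h', -⟩)
      exacts [Or.inl h', Or.inr h', absurd h' h]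
    · rintro (h' | h')
      exacts [Or.inl h', Or.inr (Or.inl ⟨.rfl, h'⟩)]
  have hdisj : Disjoint (K.connectedComponentMk a).supp (K.connectedComponentMk b).supp :=
    Set.disjoint_left.mpr fun y hya hyb => h <|
      (mem_supp_connectedComponentMk_iff.mp hya).trans
        (mem_supp_connectedComponentMk_iff.mp hyb).symm
  simp only [compSize, Nat.card_coe_set_eq, hsupp]
  exact Set.ncard_union_eq hdisj

end CompSize

section EdgeCutSum

open SimpleGraph

variable {n : ℕ} {G G' : SimpleGraph (Fin n)} {u v : Fin n}

def cutWeight (G : SimpleGraph (Fin n)) : Sym2 (Fin n) → ℕ :=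
  Sym2.lift ⟨fun u v => if G.Adj u v then
      compSize (G.deleteEdges {s(u, v)}) u * compSize (G.deleteEdges {s(u, v)}) v else 0,
    fun u v => by simp only [G.adj_comm, Sym2.eq_swap, mul_comm]⟩

/-- For a tree this is its Wiener index: the edges separating two vertices are those of the
path between them. -/
def edgeCutSum (G : SimpleGraph (Fin n)) : ℕ := ∑ e, cutWeight G e

lemma cutWeight_mk : cutWeight G s(u, v) = if G.Adj u v then
    compSize (G.deleteEdges {s(u, v)}) u * compSize (G.deleteEdges {s(u, v)}) v else 0 :=
  rfl

lemma compSize_deleteEdges_iso (φ : G ≃g G') (s : Set (Sym2 (Fin n))) (v : Fin n) :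
    compSize (G'.deleteEdges (Sym2.map φ '' s)) (φ v) = compSize (G.deleteEdges s) v :=
  compSize_iso (H := G.deleteEdges s) (H' := G'.deleteEdges (Sym2.map φ '' s))
    ⟨φ.toEquiv, fun {x y} => by
      rw [deleteEdges_adj, deleteEdges_adj]
      exact and_congr φ.map_adj_iff
        ((Sym2.map.injective φ.injective).mem_set_image (a := s(x, y))).not⟩ v

lemma cutWeight_map (φ : G ≃g G') (e : Sym2 (Fin n)) : cutWeight G' (e.map φ) = cutWeight G e := by
  induction e using Sym2.ind with
  | _ u v =>
    have hs : Sym2.map φ '' {s(u, v)} = {s(φ u, φ v)} := by simp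
    simp only [Sym2.map_mk, cutWeight_mk, φ.map_adj_iff, ← hs, compSize_deleteEdges_iso]

lemma edgeCutSum_congr (φ : G ≃g G') : edgeCutSum G = edgeCutSum G' :=
  Fintype.sum_bijective (Sym2.map φ)
    (Finite.injective_iff_bijective.mp (Sym2.map.injective φ.injective)) _ _
    fun e => (cutWeight_map φ e).symm

end EdgeCutSum

section Transfer

open SimpleGraph

variable {n : ℕ} {G : SimpleGraph (Fin n)} {v1 v2 v3 : Fin n}

lemma cutWeight_transferEdge_of_ne {e : Sym2 (Fin n)} (h12 : G.Adj v1 v2) (h23 : G.Adj v2 v3)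
    (h13 : v1 ≠ v3) (he12 : e ≠ s(v1, v2)) (he23 : e ≠ s(v2, v3)) (he13 : e ≠ s(v1, v3)) :
    cutWeight (G.transferEdge v1 v2 v3) e = cutWeight G e := by
  induction e using Sym2.ind with
  | _ u v =>
    have hL : (G.deleteEdges (insert s(v2, v3) {s(u, v)})).Reachable v1 v2 := by
      refine (deleteEdges_adj.mpr ⟨h12, ?_⟩).reachable
      simp only [Set.mem_insert_iff, Set.mem_singleton_iff, not_or]
      exact ⟨sym2_ne_of_adj_adj h12 h13, he12.symm⟩
    have hreach : ((G.transferEdge v1 v2 v3).deleteEdges {s(u, v)}).Reachable =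
        (G.deleteEdges {s(u, v)}).Reachable := by
      rw [transferEdge_deleteEdges_of_ne he13, reachable_sup_edge_eq_of_reachable hL,
        deleteEdges_insert_sup_edge h23 (Set.mem_singleton_iff.not.mpr he23.symm)]
    have hadj : (G.transferEdge v1 v2 v3).Adj u v ↔ G.Adj u v := by
      simp only [transferEdge, sup_adj, deleteEdges_adj, Set.mem_singleton_iff, adj_edge]
      exact ⟨fun h => h.elim And.left fun h => absurd h.1.symm he13, fun h => Or.inl ⟨h, he23⟩⟩
    have hsize : compSize ((G.transferEdge v1 v2 v3).deleteEdges {s(u, v)}) =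
        compSize (G.deleteEdges {s(u, v)}) :=
      funext fun x => compSize_eq_of_reachable_iff fun y => by rw [hreach]
    rw [cutWeight_mk, cutWeight_mk, hadj, hsize]

lemma cutWeight_transferEdge_new (hG : G.IsAcyclic) (h12 : G.Adj v1 v2) (h23 : G.Adj v2 v3)
    (h13 : v1 ≠ v3) :
    cutWeight (G.transferEdge v1 v2 v3) s(v1, v3) = cutWeight G s(v2, v3) := by
  rw [cutWeight_mk, cutWeight_mk, if_pos (transferEdge_adj_new h13), if_pos h23,
    transferEdge_deleteEdges_self (hG.not_adj_of_adj_adj h12 h23 h13),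
    compSize_eq_of_reachable (adj_deleteEdges_of_adj_adj h12 h13).reachable]

lemma cutWeight_left (hG : G.IsAcyclic) (h12 : G.Adj v1 v2) (h23 : G.Adj v2 v3)
    (h13 : v1 ≠ v3) :
    cutWeight G s(v1, v2) = compSize (G.deleteEdges {s(v1, v2), s(v2, v3)}) v1 *
      (compSize (G.deleteEdges {s(v1, v2), s(v2, v3)}) v2 +
        compSize (G.deleteEdges {s(v1, v2), s(v2, v3)}) v3) := by
  obtain ⟨hK12, hK23, hK13⟩ := hG.not_reachable_deleteEdges_pair h12 h23 h13
  rw [cutWeight_mk, if_pos h12, deleteEdges_left_eq_sup h12 h23 h13,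
    compSize_sup_edge_of_not_reachable hK12 hK13, compSize_sup_edge hK23]

lemma cutWeight_transferEdge_left (hG : G.IsAcyclic) (h12 : G.Adj v1 v2) (h23 : G.Adj v2 v3)
    (h13 : v1 ≠ v3) :
    cutWeight (G.transferEdge v1 v2 v3) s(v1, v2) =
      (compSize (G.deleteEdges {s(v1, v2), s(v2, v3)}) v1 +
        compSize (G.deleteEdges {s(v1, v2), s(v2, v3)}) v3) *
      compSize (G.deleteEdges {s(v1, v2), s(v2, v3)}) v2 := by
  obtain ⟨hK12, hK23, hK13⟩ := hG.not_reachable_deleteEdges_pair h12 h23 h13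
  have he : s(v1, v2) ≠ s(v1, v3) := by simp [h23.ne, h13]
  rw [cutWeight_mk, if_pos (transferEdge_adj_left h12 h13), transferEdge_deleteEdges_of_ne he,
    Set.pair_comm, compSize_sup_edge hK13,
    compSize_sup_edge_of_not_reachable (reachable_comm.not.mp hK12) hK23]

lemma edgeCutSum_transferEdge_lt (hG : G.IsAcyclic) (h12 : G.Adj v1 v2) (h23 : G.Adj v2 v3)
    (h13 : v1 ≠ v3)
    (hsize : compSize (G.deleteEdges {s(v1, v2), s(v2, v3)}) v2 <
      compSize (G.deleteEdges {s(v1, v2), s(v2, v3)}) v1) :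
    edgeCutSum (G.transferEdge v1 v2 v3) < edgeCutSum G := by
  set S : Finset (Sym2 (Fin n)) := {s(v1, v2), s(v2, v3), s(v1, v3)}
  have hout : ∑ e ∈ Sᶜ, cutWeight (G.transferEdge v1 v2 v3) e = ∑ e ∈ Sᶜ, cutWeight G e :=
    Finset.sum_congr rfl fun e he => by
      simp only [S, Finset.mem_compl, Finset.mem_insert, Finset.mem_singleton, not_or] at he
      exact cutWeight_transferEdge_of_ne h12 h23 h13 he.1 he.2.1 he.2.2
  have hold : cutWeight (G.transferEdge v1 v2 v3) s(v2, v3) = 0 := by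
    rw [cutWeight_mk, if_neg]
    simp [transferEdge, adj_edge, h12.ne, h13]
  have hnew : cutWeight G s(v1, v3) = 0 := by
    rw [cutWeight_mk, if_neg (hG.not_adj_of_adj_adj h12 h23 h13)]
  have hS : ∀ f : Sym2 (Fin n) → ℕ,
      ∑ e ∈ S, f e = f s(v1, v2) + (f s(v2, v3) + f s(v1, v3)) := fun f => by
    rw [Finset.sum_insert (by simp [h12.ne, h13, h23.ne]),
      Finset.sum_pair (by simp [h12.ne.symm, h23.ne])]
  rw [edgeCutSum, edgeCutSum, ← Finset.sum_add_sum_compl S, ← Finset.sum_add_sum_compl S, hout,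
    hS, hS, hold, hnew, cutWeight_transferEdge_new hG h12 h23 h13,
    cutWeight_left hG h12 h23 h13, cutWeight_transferEdge_left hG h12 h23 h13]
  have h3 := compSize_pos (H := G.deleteEdges {s(v1, v2), s(v2, v3)}) (v := v3)
  nlinarith

lemma compSize_deleteEdges_pair_lt_of_le (hG : G.IsAcyclic) (h12 : G.Adj v1 v2)
    (h23 : G.Adj v2 v3) (h13 : v1 ≠ v3)
    (h : compSize (G.deleteEdges {s(v1, v2)}) v2 ≤ compSize (G.deleteEdges {s(v1, v2)}) v1) :
    compSize (G.deleteEdges {s(v1, v2), s(v2, v3)}) v2 <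
      compSize (G.deleteEdges {s(v1, v2), s(v2, v3)}) v1 := by
  obtain ⟨hK12, hK23, hK13⟩ := hG.not_reachable_deleteEdges_pair h12 h23 h13
  rw [deleteEdges_left_eq_sup h12 h23 h13, compSize_sup_edge hK23,
    compSize_sup_edge_of_not_reachable hK12 hK13] at h
  have := compSize_pos (H := G.deleteEdges {s(v1, v2), s(v2, v3)}) (v := v3)
  omega

end Transfer

namespace WGraph

open SimpleGraph

variable {n : ℕ} {v1 v2 v3 : Fin n}

def transfer (T : WGraph n) (h23 : T.G.Adj v2 v3) (h13 : v1 ≠ v3) : WGraph n where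
  G := T.G.transferEdge v1 v2 v3
  w u v := if s(u, v) = s(v1, v3) then T.w v2 v3 else if s(u, v) = s(v2, v3) then 0 else T.w u v
  symm u v := by simp only [Sym2.eq_swap (a := v), T.symm u v]
  pos u v h := by
    rcases h with h | h
    · obtain ⟨hT, he⟩ := deleteEdges_adj.mp h
      split_ifs with h1 h2
      exacts [T.pos _ _ h23, absurd h2 he, T.pos _ _ hT]
    · rw [if_pos ((adj_edge ..).mp h).1.symm]
      exact T.pos _ _ h23
  zero u v h := by
    split_ifs with h1 h2
    · refine absurd (Or.inr ((adj_edge ..).mpr ⟨h1.symm, ?_⟩)) h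
      rintro rfl
      rcases Sym2.eq_iff.mp h1 with ⟨rfl, rfl⟩ | ⟨rfl, rfl⟩ <;> exact h13 rfl
    · rfl
    · exact T.zero _ _ fun hT => h (Or.inl (deleteEdges_adj.mpr ⟨hT, h2⟩))

variable {T : WGraph n} {h23 : T.G.Adj v2 v3} {h13 : v1 ≠ v3}

lemma ew_transfer_of_ne {e : Sym2 (Fin n)} (he13 : e ≠ s(v1, v3)) (he23 : e ≠ s(v2, v3)) :
    (T.transfer h23 h13).ew e = T.ew e := by
  induction e using Sym2.ind with
  | _ u v => exact (if_neg he13).trans (if_neg he23)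

lemma edgeWeights_transfer (hnadj : ¬T.G.Adj v1 v3) :
    (T.transfer h23 h13).edgeWeights = T.edgeWeights := by
  have hnew : s(v1, v3) ∉ T.G.edgeFinset.erase s(v2, v3) := fun h =>
    hnadj (mem_edgeFinset.mp (Finset.mem_of_mem_erase h))
  have hold : (T.transfer h23 h13).ew s(v1, v3) = T.ew s(v2, v3) := if_pos rfl
  have hrest : (T.G.edgeFinset.erase s(v2, v3)).val.map (T.transfer h23 h13).ew =
      (T.G.edgeFinset.erase s(v2, v3)).val.map T.ew :=
    Multiset.map_congr rfl fun e he =>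
      ew_transfer_of_ne (fun h => hnew (h ▸ he)) (Finset.ne_of_mem_erase (Finset.mem_val.mp he))
  rw [edgeWeights, edgeWeights, show (T.transfer h23 h13).G = T.G.transferEdge v1 v2 v3 from rfl,
    edgeFinset_transferEdge h13, Finset.insert_val_of_notMem hnew, Multiset.map_cons, hold, hrest,
    ← Multiset.map_cons, ← Finset.insert_val_of_notMem (Finset.notMem_erase _ _),
    Finset.insert_erase (mem_edgeFinset.mpr h23)]

lemma edgeTransferAux_transfer (h12 : T.G.Adj v1 v2) :
    EdgeTransferAux T (T.transfer h23 h13) v1 v2 v3 :=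
  ⟨h12, h23, h13, rfl, if_pos rfl, fun _ _ he13 he23 => (if_neg he13).trans (if_neg he23)⟩

lemma exists_edgeTransferSize (hT : T.G.IsTree) (h12 : T.G.Adj v1 v2) (h23 : T.G.Adj v2 v3)
    (h13 : v1 ≠ v3)
    (h : compSize (T.G.deleteEdges {s(v1, v2)}) v2 ≤ compSize (T.G.deleteEdges {s(v1, v2)}) v1) :
    ∃ T' : WGraph n, T'.G.IsTree ∧ T'.edgeWeights = T.edgeWeights ∧ ¬WIso T T' ∧
      EdgeTransferSize T T' v1 v2 v3 := by
  have hsize := compSize_deleteEdges_pair_lt_of_le hT.isAcyclic h12 h23 h13 h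
  refine ⟨T.transfer h23 h13, hT.transferEdge h12 h23 h13,
    edgeWeights_transfer (hT.isAcyclic.not_adj_of_adj_adj h12 h23 h13), ?_,
    edgeTransferAux_transfer h12, hsize⟩
  rintro ⟨φ, -⟩
  exact (edgeCutSum_transferEdge_lt hT.isAcyclic h12 h23 h13 hsize).ne
    (edgeCutSum_congr φ).symm

end WGraph

lemma nonempty_iso_starGraph {n : ℕ} (c : Fin n) :
    Nonempty (SimpleGraph.starGraph c ≃g starGraph n) := by
  set z : Fin n := ⟨0, c.pos⟩
  have hz : ∀ x, (Equiv.swap c z x).val = 0 ↔ x = c := fun x => by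
    rw [← Fin.val_mk c.pos, Fin.val_inj, Equiv.swap_apply_eq_iff, Equiv.swap_apply_right]
  refine ⟨⟨Equiv.swap c z, fun {u v} => ?_⟩⟩
  rw [starGraph, SimpleGraph.fromRel_adj, SimpleGraph.starGraph_adj,
    (Equiv.swap c z).injective.ne_iff, hz, hz]

lemma SimpleGraph.IsTree.exists_internal_edge {n : ℕ} {G : SimpleGraph (Fin n)} (hG : G.IsTree)
    (hns : ¬Nonempty (G ≃g _root_.starGraph n)) :
    ∃ p q r s, G.Adj p q ∧ G.Adj p r ∧ r ≠ q ∧ G.Adj q s ∧ s ≠ p := by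
  by_contra! h
  obtain ⟨c, hc⟩ := hG.exists_forall_adj_adj_eq h
  rw [hG.connected.eq_starGraph_of_forall_adj_adj_eq hc] at hns
  exact hns (nonempty_iso_starGraph c)

theorem stmt13_general (W : Multiset ℝ) {n : ℕ}
    (T : WGraph n) (hT : T.G.IsTree) (hw : T.edgeWeights = W)
    (hns : ¬ Nonempty (T.G ≃g starGraph n)) :
    ∃ T' : WGraph n, T'.G.IsTree ∧ T'.edgeWeights = W ∧ ¬ WIso T T' ∧
      ∃ v1 v2 v3 : Fin n, EdgeTransferSize T T' v1 v2 v3 := by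
  obtain ⟨p, q, r, s, hpq, hpr, hrq, hqs, hsp⟩ := hT.exists_internal_edge hns
  rcases le_total (compSize (T.G.deleteEdges {s(p, q)}) q)
    (compSize (T.G.deleteEdges {s(p, q)}) p) with h | h
  · obtain ⟨T', hT', hwT', hiso, htr⟩ := WGraph.exists_edgeTransferSize hT hpq hqs hsp.symm h
    exact ⟨T', hT', hwT'.trans hw, hiso, p, q, s, htr⟩
  · rw [Sym2.eq_swap] at h
    obtain ⟨T', hT', hwT', hiso, htr⟩ :=
      WGraph.exists_edgeTransferSize hT hpq.symm hpr hrq.symm h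
    exact ⟨T', hT', hwT'.trans hw, hiso, q, p, r, htr⟩

theorem stmt13 (W : Multiset ℝ) (hW : ∀ x ∈ W, 0 < x) (hcard : 2 ≤ Multiset.card W) {n : ℕ}
    (T : WGraph n) (hT : T.G.IsTree) (hw : T.edgeWeights = W)
    (hns : ¬ Nonempty (T.G ≃g starGraph n)) :
    ∃ T' : WGraph n, T'.G.IsTree ∧ T'.edgeWeights = W ∧ ¬ WIso T T' ∧
      ∃ v1 v2 v3 : Fin n, EdgeTransferSize T T' v1 v2 v3 :=
  stmt13_general W T hT hw hns
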